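/- Let A be a commutative noetherian ring, S a multiplicative subset, J a finite poset, and C a full subcategory of Fun(J, ModFG A). Let w = Isom_{S,C} be the class of morphisms of C inverted by objectwise localization. Then: (i) w is saturated and strictly multiplicative; (ii) given f : x → y in w and any g : z → y in C, there exist h : z → x in C and s ∈ S with s·g = f∘h; and (iii) w is a right localizing set in C (right permutative and right reversible with respect to all morphisms of C). -/

import Mathlib

section Diagrams

variable (R : Type) [CommRing R] (J : Type) [PartialOrder J]

/-- A `J`-indexed diagram of `R`-modules (a functor from the poset `J` to `R`-modules). -/
structure Diagram where
  M : J → Type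
  [acg : ∀ j, AddCommGroup (M j)]
  [mod : ∀ j, Module R (M j)]
  map : ∀ {j k : J}, j ≤ k → (M j →ₗ[R] M k)
  map_refl : ∀ j : J, map (le_refl j) = LinearMap.id
  map_trans : ∀ {i j k : J} (h : i ≤ j) (h' : j ≤ k),
    map (le_trans h h') = (map h').comp (map h)

attribute [instance] Diagram.acg Diagram.mod

variable {R J}

/-- A family of linear maps is a morphism of diagrams when it is natural. -/
def IsDiagramHom (x y : Diagram R J) (f : ∀ j, x.M j →ₗ[R] y.M j) : Prop :=
  ∀ (j k : J) (h : j ≤ k), (y.map h).comp (f j) = (f k).comp (x.map h)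

/-- Composition of families of linear maps. -/
def diagComp {x y z : Diagram R J} (g : ∀ j, y.M j →ₗ[R] z.M j)
    (f : ∀ j, x.M j →ₗ[R] y.M j) : ∀ j, x.M j →ₗ[R] z.M j :=
  fun j => (g j).comp (f j)

/-- The identity morphism of a diagram. -/
def diagId (x : Diagram R J) : ∀ j, x.M j →ₗ[R] x.M j := fun _ => LinearMap.id

end Diagrams

section Localized

variable {A : Type} [CommRing A] (S : Submonoid A) {J : Type} [PartialOrder J]

/-- The localization of a linear map, as a map between localized modules. -/
noncomputable def locMap {M N : Type} [AddCommGroup M] [Module A M] [AddCommGroup N]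
    [Module A N] (f : M →ₗ[A] N) : LocalizedModule S M →ₗ[A] LocalizedModule S N :=
  IsLocalizedModule.map S (LocalizedModule.mkLinearMap S M)
    (LocalizedModule.mkLinearMap S N) f

/-- The objectwise localization of a diagram of modules. -/
noncomputable def locDiagram (x : Diagram A J) : Diagram A J where
  M j := LocalizedModule S (x.M j)
  map h := locMap S (x.map h)
  map_refl j := by
    show locMap S (x.map (le_refl j)) = LinearMap.id
    rw [x.map_refl j]
    exact IsLocalizedModule.map_id S _
  map_trans h h' := by
    show locMap S (x.map (le_trans h h')) = LinearMap.comp _ _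
    rw [x.map_trans h h']
    exact IsLocalizedModule.map_comp' S _ _ _ _ _

/-- A morphism of diagrams is a weak isomorphism (belongs to `w = Isom_{S,C}`) when its
objectwise localization is an isomorphism, i.e. bijective in each component. -/
noncomputable def IsLocIso (x y : Diagram A J) (f : ∀ j, x.M j →ₗ[A] y.M j) : Prop :=
  ∀ j, Function.Bijective (locMap S (f j))

end Localized

/-!
Localization is a functor, so `Isom_{S,C}` is saturated and strictly multiplicative. The rest
rests on two facts about a map `f` whose localization is bijective: on a finitely presented
source (over a noetherian ring, any finite one), any `g` lifts through `f` up to a factor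
`s ∈ S` (as `S⁻¹Hom(P, N) ≅ Hom(S⁻¹P, S⁻¹N)`), and two maps out of a finite module that agree
after composing with `f` agree after multiplying by some `s ∈ S`. Componentwise lifts need not
be natural, but their naturality defects vanish after composing with `f`, so one more factor
from `S` kills them; as `J` is finite, all these factors multiply to a single one.
Multiplication by `s ∈ S` lies in `Isom_{S,C}`, and it completes the squares of right
permutativity and coequalizes the pairs of right reversibility.
-/

open IsLocalizedModule

lemma Submonoid.exists_mem_forall_of_forall_exists_mem {A : Type} [CommMonoid A] (S : Submonoid A)
    {ι : Type} [Finite ι] {p : ι → A → Prop} (hp : ∀ i a b, p i a → p i (b * a))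
    (h : ∀ i, ∃ s ∈ S, p i s) : ∃ s ∈ S, ∀ i, p i s := by
  classical
  have := Fintype.ofFinite ι
  choose s hsS hs using h
  refine ⟨∏ i, s i, S.prod_mem fun i _ => hsS i, fun i => ?_⟩
  rw [← Finset.prod_erase_mul _ _ (Finset.mem_univ i)]
  exact hp i _ _ (hs i)

section LinearMaps

variable {A : Type} [CommRing A] (S : Submonoid A)
  {M N P : Type} [AddCommGroup M] [Module A M] [AddCommGroup N] [Module A N]
  [AddCommGroup P] [Module A P]

lemma locMap_comp_mkLinearMap (f : M →ₗ[A] N) :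
    locMap S f ∘ₗ LocalizedModule.mkLinearMap S M = LocalizedModule.mkLinearMap S N ∘ₗ f :=
  map_comp S _ _ f

lemma locMap_comp (f : M →ₗ[A] N) (g : N →ₗ[A] P) :
    locMap S (g ∘ₗ f) = locMap S g ∘ₗ locMap S f :=
  map_comp' S _ _ _ _ _

lemma locMap_id : locMap S (LinearMap.id : M →ₗ[A] M) = LinearMap.id :=
  map_id S _

lemma locMap_smul_id_bijective {s : A} (hs : s ∈ S) :
    Function.Bijective (locMap S (s • LinearMap.id : M →ₗ[A] M)) := by
  rw [locMap, map_smul, ← locMap, locMap_id, ← Module.algebraMap_end_eq_smul_id]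
  exact (Module.End.isUnit_iff _).mp (map_units (LocalizedModule.mkLinearMap S M) ⟨s, hs⟩)

lemma exists_smul_eq_of_comp_eq [Module.Finite A M] {f : N →ₗ[A] P}
    (hf : Function.Injective (locMap S f)) {a b : M →ₗ[A] N} (h : f ∘ₗ a = f ∘ₗ b) :
    ∃ s ∈ S, s • a = s • b := by
  have hloc : LocalizedModule.mkLinearMap S N ∘ₗ a = LocalizedModule.mkLinearMap S N ∘ₗ b := by
    refine LinearMap.ext fun m => hf ?_
    have hm := congr(LocalizedModule.mkLinearMap S P ($h m))
    rwa [LinearMap.comp_apply, LinearMap.comp_apply, ← LinearMap.comp_apply (locMap S f),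
      ← LinearMap.comp_apply (locMap S f), locMap_comp_mkLinearMap]
  obtain ⟨s, hs⟩ := Module.Finite.exists_smul_of_comp_eq_of_isLocalizedModule S _ a b hloc
  exact ⟨s, s.2, hs⟩

lemma exists_comp_eq_smul_of_locMap_bijective [Module.FinitePresentation A P] {f : M →ₗ[A] N}
    (hf : Function.Bijective (locMap S f)) (g : P →ₗ[A] N) :
    ∃ s ∈ S, ∃ h : P →ₗ[A] M, f ∘ₗ h = s • g := by
  let e := LinearEquiv.ofBijective _ hf
  obtain ⟨h, s, hh⟩ := Module.FinitePresentation.exists_lift_of_isLocalizedModule S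
    (LocalizedModule.mkLinearMap S M) (e.symm.toLinearMap ∘ₗ LocalizedModule.mkLinearMap S N ∘ₗ g)
  have hloc : LocalizedModule.mkLinearMap S N ∘ₗ (f ∘ₗ h) =
      LocalizedModule.mkLinearMap S N ∘ₗ ((s : A) • g) := by
    rw [← LinearMap.comp_assoc, ← locMap_comp_mkLinearMap, LinearMap.comp_assoc, hh]
    ext p
    simp [e, Submonoid.smul_def]
  obtain ⟨t, ht⟩ := Module.Finite.exists_smul_of_comp_eq_of_isLocalizedModule S _ _ _ hloc
  refine ⟨t * s, S.mul_mem t.2 s.2, (t : A) • h, ?_⟩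
  rw [LinearMap.comp_smul, mul_smul]
  exact ht

end LinearMaps

section Diagrams

variable {A : Type} [CommRing A] (S : Submonoid A) {J : Type} [PartialOrder J]
  {x y z : Diagram A J}

lemma isDiagramHom_smul_diagId (s : A) : IsDiagramHom x x (s • diagId x) := by
  intro j k _
  ext m
  simp [diagId]

lemma isLocIso_smul_diagId {s : A} (hs : s ∈ S) : IsLocIso S x x (s • diagId x) :=
  fun _ => locMap_smul_id_bijective S hs

lemma diagComp_smul_diagId (f : ∀ j, x.M j →ₗ[A] y.M j) (s : A) :
    diagComp f (s • diagId x) = s • f := by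
  funext j
  exact LinearMap.comp_smul _ _ _

lemma IsDiagramHom.smul {f : ∀ j, x.M j →ₗ[A] y.M j} (hf : IsDiagramHom x y f) (s : A) :
    IsDiagramHom x y (s • f) := by
  intro j k hjk
  simp only [Pi.smul_apply, LinearMap.comp_smul, LinearMap.smul_comp, hf j k hjk]

lemma isLocIso_diagComp_iff {f : ∀ j, x.M j →ₗ[A] y.M j} {g : ∀ j, y.M j →ₗ[A] z.M j} :
    IsLocIso S x z (diagComp g f) ↔ ∀ j, Function.Bijective (locMap S (g j) ∘ locMap S (f j)) := by
  simp only [IsLocIso, diagComp, locMap_comp, LinearMap.coe_comp]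

lemma IsLocIso.comp {f : ∀ j, x.M j →ₗ[A] y.M j} {g : ∀ j, y.M j →ₗ[A] z.M j}
    (hf : IsLocIso S x y f) (hg : IsLocIso S y z g) : IsLocIso S x z (diagComp g f) :=
  (isLocIso_diagComp_iff S).mpr fun j => (hg j).comp (hf j)

lemma IsLocIso.of_comp_left {f : ∀ j, x.M j →ₗ[A] y.M j} {g : ∀ j, y.M j →ₗ[A] z.M j}
    (hf : IsLocIso S x y f) (hgf : IsLocIso S x z (diagComp g f)) : IsLocIso S y z g :=
  fun j => (Function.Bijective.of_comp_iff _ (hf j)).mp ((isLocIso_diagComp_iff S).mp hgf j)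

lemma IsLocIso.of_comp_right {f : ∀ j, x.M j →ₗ[A] y.M j} {g : ∀ j, y.M j →ₗ[A] z.M j}
    (hg : IsLocIso S y z g) (hgf : IsLocIso S x z (diagComp g f)) : IsLocIso S x y f :=
  fun j => (Function.Bijective.of_comp_iff' (hg j) _).mp ((isLocIso_diagComp_iff S).mp hgf j)

lemma locMap_leftInverse_of_diagComp_eq_diagId {a : ∀ j, x.M j →ₗ[A] y.M j}
    {b : ∀ j, y.M j →ₗ[A] x.M j} (h : diagComp b a = diagId x) (j : J) :
    Function.LeftInverse (locMap S (b j)) (locMap S (a j)) := fun m => by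
  rw [← LinearMap.comp_apply, ← locMap_comp]
  change locMap S (diagComp b a j) m = m
  rw [h, diagId, locMap_id, LinearMap.id_apply]

lemma isLocIso_of_diagComp_eq_diagId {f : ∀ j, x.M j →ₗ[A] y.M j} {g : ∀ j, y.M j →ₗ[A] x.M j}
    (hgf : diagComp g f = diagId x) (hfg : diagComp f g = diagId y) : IsLocIso S x y f :=
  fun j => ⟨(locMap_leftInverse_of_diagComp_eq_diagId S hgf j).injective,
    (locMap_leftInverse_of_diagComp_eq_diagId S hfg j).surjective⟩

variable [Finite J]

lemma exists_smul_eq_of_diagComp_eq (hx : ∀ j, Module.Finite A (x.M j))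
    {f g : ∀ j, x.M j →ₗ[A] y.M j} {b : ∀ j, y.M j →ₗ[A] z.M j} (hb : IsLocIso S y z b)
    (h : diagComp b f = diagComp b g) : ∃ s ∈ S, s • f = s • g := by
  obtain ⟨s, hs, hfg⟩ := Submonoid.exists_mem_forall_of_forall_exists_mem S
    (p := fun j s => s • f j = s • g j) (fun j s t hs => by simp only [mul_smul, hs])
    (fun j => exists_smul_eq_of_comp_eq S (hb j).injective (congrFun h j))
  exact ⟨s, hs, funext hfg⟩

lemma exists_isDiagramHom_smul (hz : ∀ j, Module.Finite A (z.M j))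
    {f : ∀ j, x.M j →ₗ[A] y.M j} (hfnat : IsDiagramHom x y f) (hf : IsLocIso S x y f)
    {g : ∀ j, z.M j →ₗ[A] y.M j} (hgnat : IsDiagramHom z y g)
    {h : ∀ j, z.M j →ₗ[A] x.M j} (hfh : ∀ j, f j ∘ₗ h j = g j) :
    ∃ s ∈ S, IsDiagramHom z x (s • h) := by
  have hdefect (j k : J) (hjk : j ≤ k) :
      f k ∘ₗ (x.map hjk ∘ₗ h j) = f k ∘ₗ (h k ∘ₗ z.map hjk) := by
    rw [← LinearMap.comp_assoc, ← hfnat, LinearMap.comp_assoc, hfh, ← LinearMap.comp_assoc, hfh,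
      hgnat]
  obtain ⟨s, hs, hnat⟩ := Submonoid.exists_mem_forall_of_forall_exists_mem S
    (p := fun (jk : J × J) s => ∀ hjk : jk.1 ≤ jk.2,
      s • (x.map hjk ∘ₗ h jk.1) = s • (h jk.2 ∘ₗ z.map hjk))
    (fun _ s t hs hjk => by simp only [mul_smul, hs hjk])
    (fun ⟨j, k⟩ => by
      by_cases hjk : j ≤ k
      · obtain ⟨s, hs, hdef⟩ := exists_smul_eq_of_comp_eq S (hf k).injective (hdefect j k hjk)
        exact ⟨s, hs, fun _ => hdef⟩
      · exact ⟨1, S.one_mem, fun h => absurd h hjk⟩)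
  refine ⟨s, hs, fun j k hjk => ?_⟩
  simpa only [Pi.smul_apply, LinearMap.comp_smul, LinearMap.smul_comp] using hnat (j, k) hjk

lemma exists_isDiagramHom_smul_eq_comp (hz : ∀ j, Module.FinitePresentation A (z.M j))
    {f : ∀ j, x.M j →ₗ[A] y.M j} (hfnat : IsDiagramHom x y f) (hf : IsLocIso S x y f)
    {g : ∀ j, z.M j →ₗ[A] y.M j} (hgnat : IsDiagramHom z y g) :
    ∃ h, IsDiagramHom z x h ∧ ∃ s ∈ S, ∀ j, s • g j = f j ∘ₗ h j := by
  obtain ⟨s, hs, hlift⟩ := Submonoid.exists_mem_forall_of_forall_exists_mem S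
    (p := fun j s => ∃ h : z.M j →ₗ[A] x.M j, f j ∘ₗ h = s • g j)
    (fun j s t ⟨h, hh⟩ => ⟨t • h, by rw [LinearMap.comp_smul, hh, mul_smul]⟩)
    (fun j => exists_comp_eq_smul_of_locMap_bijective S (hf j) (g j))
  choose h hh using hlift
  obtain ⟨t, ht, hnat⟩ := exists_isDiagramHom_smul S (fun j => inferInstance) hfnat hf
    (hgnat.smul s) hh
  refine ⟨t • h, hnat, t * s, S.mul_mem ht hs, fun j => ?_⟩
  rw [Pi.smul_apply, LinearMap.comp_smul, hh, mul_smul]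

end Diagrams
/-- for a full subcategory `C` (given by the predicate `P`) of diagrams of
finitely generated modules over a noetherian ring, the class `w = Isom_{S,C}` of morphisms
inverted by localization is (i) saturated and strictly multiplicative, (ii) admits
denominators: any `g : z → y` factors as `s • g = f ∘ h` through any `f : x → y` in `w`,
and (iii) is right localizing in `C` (right permutative and right reversible with respect
to all morphisms of `C`). -/
theorem isLocIso_saturated_strictlyMultiplicative_rightLocalizing
    (A : Type) [CommRing A] [IsNoetherianRing A] (S : Submonoid A)
    (ι : Type) [Fintype ι] (I : ι → Type) [∀ i, Fintype (I i)] [∀ i, LinearOrder (I i)]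
    (P : Diagram A (∀ i, I i) → Prop)
    (hfin : ∀ z, P z → ∀ j, Module.Finite A (z.M j)) :
    -- (i) saturated
    ((∀ x y z, P x → P y → P z →
      ∀ f, IsDiagramHom x y f → ∀ g, IsDiagramHom y z g →
        ((IsLocIso S x y f → IsLocIso S y z g → IsLocIso S x z (diagComp g f)) ∧
         (IsLocIso S x y f → IsLocIso S x z (diagComp g f) → IsLocIso S y z g) ∧
         (IsLocIso S y z g → IsLocIso S x z (diagComp g f) → IsLocIso S x y f))) ∧
    -- (i) strictly multiplicative: contains all isomorphisms ...
    (∀ x y, P x → P y → ∀ f, IsDiagramHom x y f →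
      (∃ g, IsDiagramHom y x g ∧ diagComp g f = diagId x ∧ diagComp f g = diagId y) →
      IsLocIso S x y f) ∧
    -- ... and is closed under composition
    (∀ x y z, P x → P y → P z →
      ∀ f, IsDiagramHom x y f → ∀ g, IsDiagramHom y z g →
        IsLocIso S x y f → IsLocIso S y z g → IsLocIso S x z (diagComp g f))) ∧
    -- (ii) denominators exist
    (∀ x y z, P x → P y → P z →
      ∀ f, IsDiagramHom x y f → IsLocIso S x y f →
      ∀ g, IsDiagramHom z y g →
        ∃ h, IsDiagramHom z x h ∧ ∃ s ∈ S, ∀ j, s • (g j) = (f j).comp (h j)) ∧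
    -- (iii) right permutative with respect to all morphisms of `C`
    ((∀ x y z, P x → P y → P z →
      ∀ a, IsDiagramHom x z a → IsLocIso S x z a →
      ∀ b, IsDiagramHom y z b →
        ∃ u, P u ∧ ∃ a', IsDiagramHom u y a' ∧ IsLocIso S u y a' ∧
          ∃ b', IsDiagramHom u x b' ∧ diagComp a b' = diagComp b a') ∧
    -- (iii) right reversible with respect to all morphisms of `C`
    (∀ x y z, P x → P y → P z →
      ∀ f, IsDiagramHom x y f → ∀ g, IsDiagramHom x y g →
      ∀ b, IsDiagramHom y z b → IsLocIso S y z b →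
        diagComp b f = diagComp b g →
        ∃ u, P u ∧ ∃ c, IsDiagramHom u x c ∧ IsLocIso S u x c ∧
          diagComp f c = diagComp g c)) := by
  have hfp (z) (hz : P z) (j) : Module.FinitePresentation A (z.M j) :=
    have := hfin z hz j
    Module.finitePresentation_of_finite A (z.M j)
  refine ⟨⟨?_, ?_, fun x y z _ _ _ f _ g _ hf hg => hf.comp S hg⟩, ?_, ?_, ?_⟩
  · exact fun x y z _ _ _ f _ g _ =>
      ⟨fun hf hg => hf.comp S hg, fun hf => hf.of_comp_left S, fun hg => hg.of_comp_right S⟩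
  · rintro x y _ _ f _ ⟨g, _, hgf, hfg⟩
    exact isLocIso_of_diagComp_eq_diagId S hgf hfg
  · intro x y z _ _ hz f hfnat hf g hgnat
    exact exists_isDiagramHom_smul_eq_comp S (hfp z hz) hfnat hf hgnat
  · intro x y z _ hy _ a hanat ha b hbnat
    obtain ⟨h, hnat, s, hs, hsb⟩ := exists_isDiagramHom_smul_eq_comp S (hfp y hy) hanat ha hbnat
    refine ⟨y, hy, s • diagId y, isDiagramHom_smul_diagId s, isLocIso_smul_diagId S hs,
      h, hnat, ?_⟩
    rw [diagComp_smul_diagId]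
    exact funext fun j => (hsb j).symm
  · intro x y z hx _ _ f _ g _ b _ hb hbfg
    obtain ⟨s, hs, hsfg⟩ := exists_smul_eq_of_diagComp_eq S (hfin x hx) hb hbfg
    refine ⟨x, hx, s • diagId x, isDiagramHom_smul_diagId s, isLocIso_smul_diagId S hs, ?_⟩
    rw [diagComp_smul_diagId, diagComp_smul_diagId, hsfg]
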